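/- arXiv:2406.11675 — 3 statements merged into one kernel-verified Lean document; each statement's English description precedes it below -/
import Mathlib

section
/- Let B̃ ∈ ℝ^{N×k} have full column rank k (k ≤ N), let D ∈ ℝ^{k×k} be diagonal with strictly positive diagonal entries, and let σ > 0. Then the limit as λ → 0⁺ of [ log det(λ I_N + σ² B̃·B̃ᵀ) − log det(λ I_N + B̃·D·B̃ᵀ) ] exists and equals 2k·log σ − log det D. -/
/-!
By the Weinstein–Aronszajn identity, `det (λ • 1 + B * C) = λ ^ (N - k) * det (λ • 1 + C * B)`
for `B : N × k` and `C : k × N`. Writing both matrices in the form `B̃ * C`, each log-determinant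
is `(N - k) log λ` plus the log-determinant of a `k × k` matrix tending to `σ² B̃ᵀB̃`, resp.
`D B̃ᵀB̃`. These limits are invertible because `B̃` has full column rank, so the divergent terms
cancel and continuity of `log ∘ det` at them gives the limit.
-/

open Matrix Filter Topology

namespace Matrix

variable {m n K : Type*} [Fintype m] [Fintype n]

theorem det_ne_zero_of_rank_eq_card [Field K] [DecidableEq n] {A : Matrix n n K}
    (h : A.rank = Fintype.card n) : A.det ≠ 0 := by
  have hrange : LinearMap.range A.mulVecLin = ⊤ :=
    Submodule.eq_top_of_finrank_eq (by rw [Module.finrank_fintype_fun_eq_card, ← h]; rfl)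
  rw [← isUnit_iff_ne_zero, ← isUnit_iff_isUnit_det, ← mulVec_surjective_iff_isUnit]
  exact LinearMap.range_eq_top.mp hrange

theorem det_transpose_mul_self_ne_zero [Field K] [LinearOrder K] [IsStrictOrderedRing K]
    [DecidableEq n] {B : Matrix m n K} (h : B.rank = Fintype.card n) : (Bᵀ * B).det ≠ 0 :=
  det_ne_zero_of_rank_eq_card (by rw [rank_transpose_mul_self, h])

variable [DecidableEq m] [DecidableEq n]

theorem det_smul_one_add_mul_mul_pow [Field K] (B : Matrix m n K) (C : Matrix n m K) {l : K}
    (hl : l ≠ 0) :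
    det (l • 1 + B * C) * l ^ Fintype.card n = l ^ Fintype.card m * det (l • 1 + C * B) := by
  have hBC : l • 1 + B * C = l • (1 + B * (l⁻¹ • C)) := by
    rw [smul_add, Matrix.mul_smul, smul_smul, mul_inv_cancel₀ hl, one_smul]
  have hCB : l • 1 + C * B = l • (1 + (l⁻¹ • C) * B) := by
    rw [smul_add, Matrix.smul_mul, smul_smul, mul_inv_cancel₀ hl, one_smul]
  rw [hBC, hCB, det_smul, det_smul, det_one_add_mul_comm]
  ring

theorem log_det_smul_one_add_mul {B : Matrix m n ℝ} {C : Matrix n m ℝ} {l : ℝ} (hl : l ≠ 0)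
    (hCB : det (l • 1 + C * B) ≠ 0) :
    Real.log (det (l • 1 + B * C))
      = (Fintype.card m - Fintype.card n) * Real.log l + Real.log (det (l • 1 + C * B)) := by
  have h := det_smul_one_add_mul_mul_pow B C hl
  have hBC : det (l • 1 + B * C) ≠ 0 := by
    intro h0
    rw [h0, zero_mul, eq_comm] at h
    exact mul_ne_zero (pow_ne_zero _ hl) hCB h
  have hlog := congrArg Real.log h
  rw [Real.log_mul hBC (pow_ne_zero _ hl), Real.log_mul (pow_ne_zero _ hl) hCB,
    Real.log_pow, Real.log_pow] at hlog
  linarith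

theorem tendsto_det_smul_one_add (A : Matrix n n ℝ) :
    Tendsto (fun l : ℝ => det (l • 1 + A)) (𝓝 0) (𝓝 A.det) := by
  have hcont : Continuous fun l : ℝ => det (l • (1 : Matrix n n ℝ) + A) := by fun_prop
  simpa using hcont.tendsto 0

theorem tendsto_log_det_smul_one_add_mul_sub {B : Matrix m n ℝ} {C : Matrix n m ℝ}
    (hCB : (C * B).det ≠ 0) :
    Tendsto (fun l : ℝ => Real.log (det (l • 1 + B * C))
        - (Fintype.card m - Fintype.card n) * Real.log l)
      (𝓝[≠] 0) (𝓝 (Real.log (C * B).det)) := by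
  have hdet := (tendsto_det_smul_one_add (C * B)).mono_left (nhdsWithin_le_nhds (s := {0}ᶜ))
  refine (hdet.log hCB).congr' ?_
  filter_upwards [hdet.eventually_ne hCB, self_mem_nhdsWithin] with l hl hl0
  rw [log_det_smul_one_add_mul hl0 hl]
  ring

end Matrix

/-- **Log-determinant-ratio limit** (Equations (27)–(34)).
If `B̃ : ℝ^{N×k}` has full column rank `k`, `D = diag(d)` with `d > 0` entrywise, and
`σ > 0`, then `log det(λ I_N + σ² B̃B̃ᵀ) − log det(λ I_N + B̃DB̃ᵀ) → 2k log σ − log det D`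
as `λ → 0⁺`. -/
theorem logDet_ratio_tendsto {N k : ℕ}
    (Bt : Matrix (Fin N) (Fin k) ℝ) (hrank : Bt.rank = k)
    (d : Fin k → ℝ) (hd : ∀ t, 0 < d t) (σ : ℝ) (hσ : 0 < σ) :
    Filter.Tendsto
      (fun l : ℝ =>
        Real.log (l • (1 : Matrix (Fin N) (Fin N) ℝ) + σ ^ 2 • (Bt * Btᵀ)).det
          - Real.log
              (l • (1 : Matrix (Fin N) (Fin N) ℝ) + Bt * Matrix.diagonal d * Btᵀ).det)
      (nhdsWithin 0 (Set.Ioi 0))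
      (nhds (2 * k * Real.log σ - Real.log (Matrix.diagonal d).det)) := by
  have hM : (Btᵀ * Bt).det ≠ 0 := det_transpose_mul_self_ne_zero (by rw [hrank, Fintype.card_fin])
  have hD : (diagonal d).det ≠ 0 := by
    rw [det_diagonal]; exact Finset.prod_ne_zero_iff.mpr fun t _ => (hd t).ne'
  have hσk : (σ ^ 2) ^ k ≠ 0 := by positivity
  have h₁ := tendsto_log_det_smul_one_add_mul_sub (B := Bt) (C := σ ^ 2 • Btᵀ)
    (by rw [Matrix.smul_mul, det_smul, Fintype.card_fin]; exact mul_ne_zero hσk hM)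
  have h₂ := tendsto_log_det_smul_one_add_mul_sub (B := Bt) (C := diagonal d * Btᵀ)
    (by rw [Matrix.mul_assoc, det_mul]; exact mul_ne_zero hD hM)
  have hlim : Real.log ((σ ^ 2 • Btᵀ) * Bt).det - Real.log ((diagonal d * Btᵀ) * Bt).det
      = 2 * k * Real.log σ - Real.log (diagonal d).det := by
    rw [Matrix.smul_mul, det_smul, Matrix.mul_assoc, det_mul, Fintype.card_fin,
      Real.log_mul hσk hM, Real.log_mul hD hM, Real.log_pow, Real.log_pow]
    push_cast
    ring
  rw [← hlim, Matrix.mul_assoc Bt]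
  refine ((h₁.sub h₂).mono_left (nhdsWithin_mono _ fun l hl => ne_of_gt hl)).congr fun l => ?_
  rw [Matrix.mul_smul]
  ring
end

section
/- Let B̃ ∈ ℝ^{N×k} have full column rank k (k ≤ N), let D ∈ ℝ^{k×k} be diagonal with nonnegative diagonal entries, and let σ > 0. Then the limit as λ → 0⁺ of tr( (λ I_N + σ² B̃·B̃ᵀ)⁻¹ · (λ I_N + B̃·D·B̃ᵀ) ) exists and equals (N − k) + σ⁻² · tr(D). -/
open Matrix

/-- **Trace-term limit** (Equations (36)–(41)).
If `B̃ : ℝ^{N×k}` has full column rank `k`, `D = diag(d)` with `d ≥ 0` entrywise, and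
`σ > 0`, then `tr((λ I_N + σ² B̃B̃ᵀ)⁻¹ (λ I_N + B̃DB̃ᵀ)) → (N − k) + σ⁻² tr(D)` as
`λ → 0⁺`. -/
theorem trace_term_tendsto {N k : ℕ}
    (Bt : Matrix (Fin N) (Fin k) ℝ) (hrank : Bt.rank = k)
    (d : Fin k → ℝ) (hd : ∀ t, 0 ≤ d t) (σ : ℝ) (hσ : 0 < σ) :
    Filter.Tendsto
      (fun l : ℝ =>
        ((l • (1 : Matrix (Fin N) (Fin N) ℝ) + σ ^ 2 • (Bt * Btᵀ))⁻¹
            * (l • (1 : Matrix (Fin N) (Fin N) ℝ) + Bt * Matrix.diagonal d * Btᵀ)).trace)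
      (nhdsWithin 0 (Set.Ioi 0))
      (nhds ((N : ℝ) - k + σ⁻¹ ^ 2 * (Matrix.diagonal d).trace)) := by
  have hσ2 : (0:ℝ) < σ ^ 2 := by positivity
  set G : Matrix (Fin k) (Fin k) ℝ := Btᵀ * Bt with hG
  set D : Matrix (Fin k) (Fin k) ℝ := Matrix.diagonal d with hD
  -- G is invertible
  have hker : LinearMap.ker Bt.mulVecLin = ⊥ := by
    have h2 := LinearMap.finrank_range_add_finrank_ker Bt.mulVecLin
    rw [Matrix.rank] at hrank
    have hfk : Module.finrank ℝ (Fin k → ℝ) = k := by simp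
    have h0 : Module.finrank ℝ (LinearMap.ker Bt.mulVecLin) = 0 := by omega
    exact Submodule.finrank_eq_zero.mp h0
  have hGunit : IsUnit G := by
    rw [← Matrix.mulVec_injective_iff_isUnit]
    have hkerG : LinearMap.ker G.mulVecLin = ⊥ := by
      rw [hG, Matrix.ker_mulVecLin_transpose_mul_self]; exact hker
    intro x y hxy
    have : G.mulVecLin x = G.mulVecLin y := hxy
    exact (LinearMap.ker_eq_bot.mp hkerG) this
  have hGdet : IsUnit G.det := (Matrix.isUnit_iff_isUnit_det G).mp hGunit
  -- positive semidefiniteness of the smul terms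
  have e1 : (σ • Bt) * (σ • Bt)ᵀ = σ ^ 2 • (Bt * Btᵀ) := by
    rw [transpose_smul, Matrix.smul_mul, Matrix.mul_smul, smul_smul, sq]
  have e2 : (σ • Bt)ᵀ * (σ • Bt) = σ ^ 2 • G := by
    rw [transpose_smul, Matrix.smul_mul, Matrix.mul_smul, smul_smul, sq, hG]
  have hpsd1 : (σ ^ 2 • (Bt * Btᵀ)).PosSemidef := by
    rw [← e1]
    simpa [Matrix.conjTranspose_eq_transpose_of_trivial] using
      Matrix.posSemidef_self_mul_conjTranspose (σ • Bt)
  have hpsd2 : (σ ^ 2 • G).PosSemidef := by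
    rw [← e2]
    simpa [Matrix.conjTranspose_eq_transpose_of_trivial] using
      Matrix.posSemidef_conjTranspose_mul_self (σ • Bt)
  -- determinants of the shifted matrices are units for l > 0
  have hunit : ∀ {n : ℕ} (C : Matrix (Fin n) (Fin n) ℝ), C.PosSemidef → ∀ {l : ℝ}, 0 < l →
      IsUnit (l • (1 : Matrix (Fin n) (Fin n) ℝ) + C).det := by
    intro n C hC l hl
    have h1 : (l • (1 : Matrix (Fin n) (Fin n) ℝ)).PosDef := by
      rw [smul_one_eq_diagonal]
      exact Matrix.posDef_diagonal_iff.mpr fun _ => hl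
    exact (h1.add_posSemidef hC).det_pos.ne'.isUnit
  -- the auxiliary function
  set T : ℝ → Matrix (Fin k) (Fin k) ℝ :=
    fun l => l • (1 : Matrix (Fin k) (Fin k) ℝ) + σ ^ 2 • G with hT
  set g : ℝ → ℝ := fun l =>
    (N : ℝ) - σ ^ 2 * ((T l)⁻¹ * G).trace + ((T l)⁻¹ * (D * G)).trace with hg
  -- the original function agrees with g on Ioi 0
  have hagree : ∀ l ∈ Set.Ioi (0:ℝ),
      ((l • (1 : Matrix (Fin N) (Fin N) ℝ) + σ ^ 2 • (Bt * Btᵀ))⁻¹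
        * (l • (1 : Matrix (Fin N) (Fin N) ℝ) + Bt * D * Btᵀ)).trace = g l := by
    intro l hl
    rw [Set.mem_Ioi] at hl
    set S : Matrix (Fin N) (Fin N) ℝ := l • 1 + σ ^ 2 • (Bt * Btᵀ) with hS
    have hSdet : IsUnit S.det := hunit _ hpsd1 hl
    have hTdet : IsUnit (T l).det := hunit _ hpsd2 hl
    have hST : S * Bt = Bt * T l := by
      rw [hS, hT, hG]
      simp only [Matrix.add_mul, Matrix.mul_add, Matrix.smul_mul, Matrix.mul_smul,
        Matrix.one_mul, Matrix.mul_one, Matrix.mul_assoc]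
    have hSinvB : S⁻¹ * Bt = Bt * (T l)⁻¹ := by
      calc S⁻¹ * Bt = S⁻¹ * (Bt * T l) * (T l)⁻¹ := by
            rw [Matrix.mul_assoc (S⁻¹) (Bt * T l), Matrix.mul_assoc Bt,
              Matrix.mul_nonsing_inv _ hTdet, Matrix.mul_one]
        _ = S⁻¹ * (S * Bt) * (T l)⁻¹ := by rw [hST]
        _ = Bt * (T l)⁻¹ := by
            rw [← Matrix.mul_assoc, Matrix.nonsing_inv_mul _ hSdet, Matrix.one_mul]
    have key1 : S⁻¹ * (l • (1 : Matrix (Fin N) (Fin N) ℝ)) =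
        1 - σ ^ 2 • (Bt * ((T l)⁻¹ * Btᵀ)) := by
      have : (l • (1 : Matrix (Fin N) (Fin N) ℝ)) = S - σ ^ 2 • (Bt * Btᵀ) := by
        rw [hS]; ring_nf; abel
      rw [this, Matrix.mul_sub, Matrix.nonsing_inv_mul _ hSdet, Matrix.mul_smul]
      congr 1
      rw [← Matrix.mul_assoc, hSinvB, Matrix.mul_assoc]
    have key2 : S⁻¹ * (Bt * D * Btᵀ) = Bt * ((T l)⁻¹ * D * Btᵀ) := by
      rw [show Bt * D * Btᵀ = Bt * (D * Btᵀ) from Matrix.mul_assoc _ _ _,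
        ← Matrix.mul_assoc, hSinvB, Matrix.mul_assoc, ← Matrix.mul_assoc ((T l)⁻¹)]
    rw [Matrix.mul_add, key1, key2, trace_add, trace_sub, trace_one, trace_smul,
      trace_mul_comm Bt ((T l)⁻¹ * Btᵀ), trace_mul_comm Bt ((T l)⁻¹ * D * Btᵀ)]
    rw [hg]
    simp only [smul_eq_mul]
    rw [Matrix.mul_assoc ((T l)⁻¹) Btᵀ Bt, ← hG]
    rw [Matrix.mul_assoc ((T l)⁻¹ * D) Btᵀ Bt, Matrix.mul_assoc ((T l)⁻¹) D (Btᵀ * Bt), ← hG]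
    simp only [Fintype.card_fin]
  -- continuity of g at 0
  have hTdet0 : IsUnit (T 0).det := by
    have : T 0 = σ ^ 2 • G := by rw [hT]; simp
    rw [this, Matrix.det_smul]
    exact (IsUnit.pow _ (isUnit_iff_ne_zero.mpr hσ2.ne')).mul hGdet
  have hTcont : Continuous T := by
    rw [hT]
    exact (continuous_id.smul continuous_const).add continuous_const
  have hinv : ContinuousAt (fun l => (T l)⁻¹) 0 := by
    have h1 : ContinuousAt Inv.inv (T 0) := by
      apply continuousAt_matrix_inv
      rw [Ring.inverse_eq_inv']
      exact continuousAt_inv₀ hTdet0.ne_zero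
    exact h1.comp hTcont.continuousAt
  have htr : Continuous (Matrix.trace : Matrix (Fin k) (Fin k) ℝ → ℝ) :=
    continuous_id.matrix_trace
  have hgcont : ContinuousAt g 0 := by
    rw [hg]
    apply ContinuousAt.add
    · apply ContinuousAt.sub continuousAt_const
      exact continuousAt_const.mul
        (htr.continuousAt.comp (hinv.mul continuousAt_const))
    · exact htr.continuousAt.comp (hinv.mul continuousAt_const)
  -- value of g at 0
  have hT0 : (T 0)⁻¹ = (σ ^ 2)⁻¹ • G⁻¹ := by
    have h0 : T 0 = σ ^ 2 • G := by rw [hT]; simp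
    rw [h0]
    refine Matrix.inv_eq_left_inv ?_
    rw [Matrix.smul_mul, Matrix.mul_smul, smul_smul, Matrix.nonsing_inv_mul _ hGdet,
      inv_mul_cancel₀ hσ2.ne', one_smul]
  have hg0 : g 0 = (N : ℝ) - k + σ⁻¹ ^ 2 * D.trace := by
    rw [hg]
    simp only
    rw [hT0, Matrix.smul_mul, Matrix.nonsing_inv_mul _ hGdet, trace_smul, trace_one,
      Matrix.smul_mul, trace_smul, trace_mul_comm G⁻¹ (D * G), Matrix.mul_assoc D G G⁻¹,
      Matrix.mul_nonsing_inv _ hGdet, Matrix.mul_one]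
    simp only [smul_eq_mul, Fintype.card_fin]
    field_simp
  -- conclude
  have hgt : Filter.Tendsto g (nhdsWithin 0 (Set.Ioi 0))
      (nhds ((N : ℝ) - k + σ⁻¹ ^ 2 * D.trace)) := by
    rw [← hg0]
    exact hgcont.continuousWithinAt.tendsto
  refine hgt.congr' ?_ |>.mono_left le_rfl
  · exact Filter.eventuallyEq_of_mem self_mem_nhdsWithin fun l hl => (hagree l hl).symm
end

section
/- Let B ∈ ℝ^{m×r} have full column rank r (r ≤ m), let M, Ω ∈ ℝ^{r×n} with all entries Ω_{tj} > 0, and let σ_p > 0. Set B̃ = I_n ⊗ B ∈ ℝ^{mn×nr} and D = diag(vec(Ω)²) ∈ ℝ^{nr×nr}. Then the limit as λ → 0⁺ of (1/2)[ log( det(λ I_{mn} + σ_p² B̃·B̃ᵀ) / det(λ I_{mn} + B̃·D·B̃ᵀ) ) − mn + tr( (λ I_{mn} + σ_p² B̃·B̃ᵀ)⁻¹ (λ I_{mn} + B̃·D·B̃ᵀ) ) + vec(B·M)ᵀ (λ I_{mn} + σ_p² B̃·B̃ᵀ)⁻¹ vec(B·M) ] exists and equals Σ_{t=1}^{r} Σ_{j=1}^{n}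 [ log(σ_p / Ω_{tj}) + (Ω_{tj}² + M_{tj}²)/(2σ_p²) − 1/2 ], i.e., the KL divergence between the product Gaussian ∏_{tj} N(M_{tj}, Ω_{tj}²) and the product Gaussian ∏_{tj} N(0, σ_p²). -/
/-!
For `l > 0` write `S = l I + σ² B̃B̃ᵀ` and `P = l I + σ² B̃ᵀB̃`. The push-through identity
`B̃ᵀ S⁻¹ = P⁻¹ B̃ᵀ`, Sylvester's determinant identity and cyclicity of the trace move every term of
the regularized KL expression from the `mn`-dimensional weight space to the `nr`-dimensional
coefficient space. There `G = B̃ᵀB̃ = I ⊗ BᵀB` is invertible because `B` has full column rank,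
so the transported expression is continuous at `l = 0`. Its value there is the KL divergence between
`N(vec M, D)` and `N(0, σ² I)`, which splits along the diagonal into univariate terms.
-/

open Kronecker Matrix

/-- Column-stacking vectorization: `vec X` is indexed by pairs `(j, i)` with `j` a column
index and `i` a row index, and `vec X (j, i) = X i j`. -/
def vec {m n : ℕ} (X : Matrix (Fin m) (Fin n) ℝ) : Fin n × Fin m → ℝ :=
  fun p => X p.2 p.1

namespace Matrix

variable {ι κ : Type*} [Fintype ι] [Fintype κ]

theorem det_smul_one_add_mul_comm {𝕜 : Type*} [Field 𝕜] [DecidableEq ι] [DecidableEq κ] {l : 𝕜}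
    (hl : l ≠ 0) (A : Matrix ι κ 𝕜) (C : Matrix κ ι 𝕜) :
    (l • 1 + A * C).det * l ^ Fintype.card κ = (l • 1 + C * A).det * l ^ Fintype.card ι := by
  have hAC : l • 1 + A * C = l • (1 + A * (l⁻¹ • C)) := by
    rw [smul_add, Matrix.mul_smul, smul_smul, mul_inv_cancel₀ hl, one_smul]
  have hCA : l • 1 + C * A = l • (1 + (l⁻¹ • C) * A) := by
    rw [smul_add, Matrix.smul_mul, smul_smul, mul_inv_cancel₀ hl, one_smul]
  rw [hAC, hCA, det_smul, det_smul, det_one_add_mul_comm]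
  ring

theorem det_div_det_smul_one_add_mul_comm {𝕜 : Type*} [Field 𝕜] [DecidableEq ι] [DecidableEq κ]
    {l : 𝕜} (hl : l ≠ 0) (A : Matrix ι κ 𝕜) (C C' : Matrix κ ι 𝕜) :
    (l • 1 + A * C).det / (l • 1 + A * C').det = (l • 1 + C * A).det / (l • 1 + C' * A).det :=
  calc (l • 1 + A * C).det / (l • 1 + A * C').det
      = ((l • 1 + A * C).det * l ^ Fintype.card κ) / ((l • 1 + A * C').det * l ^ Fintype.card κ) :=
        (mul_div_mul_right _ _ (pow_ne_zero _ hl)).symm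
    _ = ((l • 1 + C * A).det * l ^ Fintype.card ι)
          / ((l • 1 + C' * A).det * l ^ Fintype.card ι) := by
        rw [det_smul_one_add_mul_comm hl A C, det_smul_one_add_mul_comm hl A C']
    _ = (l • 1 + C * A).det / (l • 1 + C' * A).det := mul_div_mul_right _ _ (pow_ne_zero _ hl)

theorem mul_inv_eq_inv_mul_of_mul_eq_mul {R : Type*} [CommRing R] [DecidableEq ι] [DecidableEq κ]
    {X : Matrix ι ι R} {Y : Matrix κ κ R} {C : Matrix κ ι R} (hX : IsUnit X.det)
    (hY : IsUnit Y.det) (h : Y * C = C * X) : C * X⁻¹ = Y⁻¹ * C :=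
  calc C * X⁻¹ = Y⁻¹ * (Y * C) * X⁻¹ := by
        rw [← Matrix.mul_assoc, nonsing_inv_mul _ hY, Matrix.one_mul]
    _ = Y⁻¹ * C := by
        rw [h, Matrix.mul_assoc, Matrix.mul_assoc, mul_nonsing_inv _ hX, Matrix.mul_one]

theorem inv_smul_of_ne_zero {𝕜 : Type*} [Field 𝕜] [DecidableEq κ] {c : 𝕜} (hc : c ≠ 0)
    {G : Matrix κ κ 𝕜} (hG : IsUnit G.det) : (c • G)⁻¹ = c⁻¹ • G⁻¹ :=
  inv_eq_right_inv <| by rw [smul_mul_smul, mul_nonsing_inv _ hG, mul_inv_cancel₀ hc, one_smul]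

theorem posDef_smul_one_add_smul_mul_transpose [DecidableEq ι] {l c : ℝ} (hl : 0 < l) (hc : 0 ≤ c)
    (A : Matrix ι κ ℝ) : (l • 1 + c • (A * Aᵀ)).PosDef :=
  (PosDef.one.smul hl).add_posSemidef ((posSemidef_self_mul_conjTranspose A).smul hc)

theorem isUnit_det_transpose_mul_self_of_rank_eq {R : Type*} [Field R] [LinearOrder R]
    [IsStrictOrderedRing R] [DecidableEq κ] {B : Matrix ι κ R} (h : B.rank = Fintype.card κ) :
    IsUnit (Bᵀ * B).det := by
  rw [← isUnit_iff_isUnit_det, ← mulVec_surjective_iff_isUnit]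
  have hrange : LinearMap.range (Bᵀ * B).mulVecLin = ⊤ := Submodule.eq_top_of_finrank_eq <| by
    rw [← rank, rank_transpose_mul_self, h, Module.finrank_fintype_fun_eq_card]
  exact fun y => LinearMap.range_eq_top.mp hrange y

theorem isUnit_det_transpose_mul_one_kronecker {ν R : Type*} [Fintype ν] [DecidableEq ν]
    [CommRing R] [DecidableEq κ] {B : Matrix ι κ R} (hB : IsUnit (Bᵀ * B).det) :
    IsUnit (((1 : Matrix ν ν R) ⊗ₖ B)ᵀ * ((1 : Matrix ν ν R) ⊗ₖ B)).det := by
  rw [← kroneckerMap_transpose, transpose_one, ← mul_kronecker_mul, Matrix.one_mul, det_kronecker,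
    det_one, one_pow, one_mul]
  exact hB.pow _

end Matrix

section GaussianKL

variable {ι κ : Type*} [Fintype ι] [Fintype κ] [DecidableEq κ]

/-- `KL[N(μ, Q) ‖ N(0, P)]`, by the closed formula for nonsingular covariances `Q` and `P`. -/
noncomputable def gaussianKL [DecidableEq ι] (Q P : Matrix ι ι ℝ) (μ : ι → ℝ) : ℝ :=
  (1 / 2) * (Real.log (P.det / Q.det) - Fintype.card ι + (P⁻¹ * Q).trace + μ ⬝ᵥ P⁻¹ *ᵥ μ)

/-- `gaussianKL (l • 1 + A * D * Aᵀ) (l • 1 + c • (A * Aᵀ)) (A *ᵥ x)` rewritten in the coordinates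
of `κ`; unlike the original, it extends continuously to `l = 0`. -/
noncomputable def lowRankKL (A : Matrix ι κ ℝ) (c : ℝ) (D : Matrix κ κ ℝ) (x : κ → ℝ) (l : ℝ) :
    ℝ :=
  (1 / 2) * (Real.log ((l • 1 + c • (Aᵀ * A)).det / (l • 1 + D * (Aᵀ * A)).det)
    - c * ((l • 1 + c • (Aᵀ * A))⁻¹ * (Aᵀ * A)).trace
    + ((l • 1 + c • (Aᵀ * A))⁻¹ * (Aᵀ * A * D)).trace
    + x ⬝ᵥ ((l • 1 + c • (Aᵀ * A))⁻¹ * (Aᵀ * A)) *ᵥ x)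

theorem gaussianKL_eq_lowRankKL [DecidableEq ι] (A : Matrix ι κ ℝ) {c : ℝ} (hc : 0 ≤ c)
    (D : Matrix κ κ ℝ) (x : κ → ℝ) {l : ℝ} (hl : 0 < l) :
    gaussianKL (l • 1 + A * D * Aᵀ) (l • 1 + c • (A * Aᵀ)) (A *ᵥ x) = lowRankKL A c D x l := by
  set S : Matrix ι ι ℝ := l • 1 + c • (A * Aᵀ)
  set P : Matrix κ κ ℝ := l • 1 + c • (Aᵀ * A)
  have hS : IsUnit S.det := (posDef_smul_one_add_smul_mul_transpose hl hc A).det_pos.ne'.isUnit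
  have hP : IsUnit P.det := by
    simpa using (posDef_smul_one_add_smul_mul_transpose hl hc Aᵀ).det_pos.ne'.isUnit
  have hpush : Aᵀ * S⁻¹ = P⁻¹ * Aᵀ := mul_inv_eq_inv_mul_of_mul_eq_mul hS hP <| by
    simp only [S, P, Matrix.add_mul, Matrix.mul_add, Matrix.smul_mul, Matrix.mul_smul,
      Matrix.one_mul, Matrix.mul_one, Matrix.mul_assoc]
  have htrace_push (X : Matrix ι κ ℝ) : (S⁻¹ * (X * Aᵀ)).trace = (P⁻¹ * (Aᵀ * X)).trace := by
    rw [← Matrix.mul_assoc, trace_mul_comm, ← Matrix.mul_assoc, hpush, Matrix.mul_assoc]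
  have hdet : S.det / (l • 1 + A * D * Aᵀ).det = P.det / (l • 1 + D * (Aᵀ * A)).det := by
    have := det_div_det_smul_one_add_mul_comm hl.ne' A (c • Aᵀ) (D * Aᵀ)
    simpa only [Matrix.mul_smul, Matrix.smul_mul, Matrix.mul_assoc] using this
  have htrace : (S⁻¹ * (l • 1 + A * D * Aᵀ)).trace
      = Fintype.card ι - c * (P⁻¹ * (Aᵀ * A)).trace + (P⁻¹ * (Aᵀ * A * D)).trace := by
    have hlS : l • S⁻¹ = 1 - c • (S⁻¹ * (A * Aᵀ)) := by
      have hSS : S⁻¹ * (l • 1 + c • (A * Aᵀ)) = 1 := nonsing_inv_mul _ hS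
      rw [Matrix.mul_add, Matrix.mul_smul, Matrix.mul_one, Matrix.mul_smul] at hSS
      rw [← hSS, add_sub_cancel_right]
    rw [Matrix.mul_add, Matrix.mul_smul, Matrix.mul_one, hlS, trace_add, trace_sub, trace_smul,
      trace_one, htrace_push, htrace_push, smul_eq_mul, Matrix.mul_assoc]
  have hquad : A *ᵥ x ⬝ᵥ S⁻¹ *ᵥ A *ᵥ x = x ⬝ᵥ (P⁻¹ * (Aᵀ * A)) *ᵥ x := by
    rw [mulVec_mulVec, dotProduct_mulVec, ← vecMul_transpose, vecMul_vecMul, ← dotProduct_mulVec,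
      ← Matrix.mul_assoc, hpush, Matrix.mul_assoc]
  rw [gaussianKL, lowRankKL, hdet, htrace, hquad]
  ring

theorem continuousAt_lowRankKL {A : Matrix ι κ ℝ} (hA : IsUnit (Aᵀ * A).det) {c : ℝ} (hc : c ≠ 0)
    {D : Matrix κ κ ℝ} (hD : IsUnit D.det) (x : κ → ℝ) : ContinuousAt (lowRankKL A c D x) 0 := by
  have hP : (c • (Aᵀ * A)).det ≠ 0 := by
    rw [det_smul]; exact mul_ne_zero (pow_ne_zero _ hc) hA.ne_zero
  have hQ : (D * (Aᵀ * A)).det ≠ 0 := by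
    rw [det_mul]; exact mul_ne_zero hD.ne_zero hA.ne_zero
  have hinv : ContinuousAt (fun l : ℝ => (l • 1 + c • (Aᵀ * A))⁻¹) 0 := by
    refine ContinuousAt.comp (g := Inv.inv) ?_ (by fun_prop)
    refine continuousAt_matrix_inv _ ?_
    simpa [Ring.inverse_eq_inv'] using continuousAt_inv₀ hP
  have hlog : ContinuousAt (fun l : ℝ =>
      Real.log ((l • 1 + c • (Aᵀ * A)).det / (l • 1 + D * (Aᵀ * A)).det)) 0 :=
    ContinuousAt.log (by fun_prop (disch := simpa using hQ)) (by simpa using div_ne_zero hP hQ)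
  unfold lowRankKL
  fun_prop

theorem lowRankKL_zero {A : Matrix ι κ ℝ} (hA : IsUnit (Aᵀ * A).det) {c : ℝ} (hc : c ≠ 0)
    (D : Matrix κ κ ℝ) (x : κ → ℝ) : lowRankKL A c D x 0 = gaussianKL D (c • 1) x := by
  have hinv : (c • (1 : Matrix κ κ ℝ))⁻¹ = c⁻¹ • 1 := by
    rw [inv_smul_of_ne_zero hc (by simp), inv_one]
  have hinvG : (c • (Aᵀ * A))⁻¹ * (Aᵀ * A) = c⁻¹ • 1 := by
    rw [inv_smul_of_ne_zero hc hA, Matrix.smul_mul, nonsing_inv_mul _ hA]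
  have hdet : (c • (Aᵀ * A)).det / (D * (Aᵀ * A)).det = (c • (1 : Matrix κ κ ℝ)).det / D.det := by
    rw [det_smul, det_smul, det_mul, det_one, mul_one, mul_div_mul_right _ _ hA.ne_zero]
  rw [lowRankKL, gaussianKL, zero_smul, zero_add, zero_add, hdet, ← Matrix.mul_assoc _ (Aᵀ * A) D,
    hinvG, hinv, trace_smul, trace_one, smul_eq_mul, mul_inv_cancel_left₀ hc]

theorem tendsto_gaussianKL_regularized [DecidableEq ι] {A : Matrix ι κ ℝ}
    (hA : IsUnit (Aᵀ * A).det) {c : ℝ} (hc : 0 < c) {D : Matrix κ κ ℝ} (hD : IsUnit D.det)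
    (x : κ → ℝ) :
    Filter.Tendsto (fun l : ℝ => gaussianKL (l • 1 + A * D * Aᵀ) (l • 1 + c • (A * Aᵀ)) (A *ᵥ x))
      (nhdsWithin 0 (Set.Ioi 0)) (nhds (gaussianKL D (c • 1) x)) := by
  rw [← lowRankKL_zero hA hc.ne']
  refine ((continuousAt_lowRankKL hA hc.ne' hD x).tendsto.mono_left nhdsWithin_le_nhds).congr' ?_
  filter_upwards [self_mem_nhdsWithin] with l hl
  exact (gaussianKL_eq_lowRankKL A hc.le D x hl).symm

theorem gaussianKL_diagonal_sq_smul_one [DecidableEq ι] {σ : ℝ} (hσ : σ ≠ 0) {s : ι → ℝ}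
    (hs : ∀ i, s i ≠ 0) (x : ι → ℝ) :
    gaussianKL (diagonal fun i => s i ^ 2) (σ ^ 2 • 1) x
      = ∑ i, (Real.log (σ / s i) + (s i ^ 2 + x i ^ 2) / (2 * σ ^ 2) - 1 / 2) := by
  have hσ2 : σ ^ 2 ≠ 0 := pow_ne_zero 2 hσ
  have hlog : Real.log ((σ ^ 2 • (1 : Matrix ι ι ℝ)).det / (diagonal fun i => s i ^ 2).det)
      = ∑ i, 2 * Real.log (σ / s i) := by
    rw [det_smul, det_one, mul_one, det_diagonal, ← Finset.card_univ, ← Finset.prod_const,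
      ← Finset.prod_div_distrib, Real.log_prod fun i _ => div_ne_zero hσ2 (pow_ne_zero 2 (hs i))]
    simp only [← div_pow, Real.log_pow, Nat.cast_ofNat]
  rw [gaussianKL, hlog, inv_smul_of_ne_zero hσ2 (by simp), inv_one, Matrix.smul_mul,
    Matrix.one_mul, trace_smul, trace_diagonal, smul_mulVec, one_mulVec, dotProduct_smul,
    dotProduct]
  simp only [smul_eq_mul, Finset.sum_add_distrib, Finset.sum_sub_distrib, ← Finset.sum_div,
    ← Finset.mul_sum, Finset.sum_const, Finset.card_univ, nsmul_eq_mul]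
  field_simp
  ring

end GaussianKL

/-- **Theorem 3.2 (Efficient Computation of Full-Weight KL Divergence), regularized form.**
With `B̃ = I_n ⊗ B`, `D = diag(vec(Om)²)`, the λ-regularized Gaussian KL expression between
`q(vec W) = N(vec(W0 + B M), B̃ D B̃ᵀ)` and the prior `P(vec W) = N(vec W0, σp² B̃ B̃ᵀ)`
converges, as `λ → 0⁺`, to the KL divergence between the low-rank product Gaussians
`∏ₜⱼ N(M t j, (Om t j)²)` and `∏ₜⱼ N(0, σp²)`, namely
`∑ₜⱼ [log(σp / Om t j) + ((Om t j)² + (M t j)²)/(2σp²) − 1/2]`. -/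
theorem blob_full_weight_klDiv_tendsto {m n r : ℕ}
    (B : Matrix (Fin m) (Fin r) ℝ) (hrank : B.rank = r)
    (M Om : Matrix (Fin r) (Fin n) ℝ) (hΩ : ∀ t j, 0 < Om t j)
    (σp : ℝ) (hσ : 0 < σp) :
    Filter.Tendsto
      (fun l : ℝ =>
        (1 / 2) *
          (Real.log
              ((l • (1 : Matrix (Fin n × Fin m) (Fin n × Fin m) ℝ)
                  + σp ^ 2 • (((1 : Matrix (Fin n) (Fin n) ℝ) ⊗ₖ B)
                      * ((1 : Matrix (Fin n) (Fin n) ℝ) ⊗ₖ B)ᵀ)).det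
                / (l • (1 : Matrix (Fin n × Fin m) (Fin n × Fin m) ℝ)
                  + ((1 : Matrix (Fin n) (Fin n) ℝ) ⊗ₖ B)
                      * Matrix.diagonal (fun p : Fin n × Fin r => (_root_.vec Om p) ^ 2)
                      * ((1 : Matrix (Fin n) (Fin n) ℝ) ⊗ₖ B)ᵀ).det)
            - (m * n : ℕ)
            + ((l • (1 : Matrix (Fin n × Fin m) (Fin n × Fin m) ℝ)
                  + σp ^ 2 • (((1 : Matrix (Fin n) (Fin n) ℝ) ⊗ₖ B)
                      * ((1 : Matrix (Fin n) (Fin n) ℝ) ⊗ₖ B)ᵀ))⁻¹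
                * (l • (1 : Matrix (Fin n × Fin m) (Fin n × Fin m) ℝ)
                  + ((1 : Matrix (Fin n) (Fin n) ℝ) ⊗ₖ B)
                      * Matrix.diagonal (fun p : Fin n × Fin r => (_root_.vec Om p) ^ 2)
                      * ((1 : Matrix (Fin n) (Fin n) ℝ) ⊗ₖ B)ᵀ)).trace
            + _root_.vec (B * M) ⬝ᵥ
                (l • (1 : Matrix (Fin n × Fin m) (Fin n × Fin m) ℝ)
                  + σp ^ 2 • (((1 : Matrix (Fin n) (Fin n) ℝ) ⊗ₖ B)
                      * ((1 : Matrix (Fin n) (Fin n) ℝ) ⊗ₖ B)ᵀ))⁻¹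
                *ᵥ _root_.vec (B * M)))
      (nhdsWithin 0 (Set.Ioi 0))
      (nhds (∑ t : Fin r, ∑ j : Fin n,
        (Real.log (σp / Om t j) + (Om t j ^ 2 + M t j ^ 2) / (2 * σp ^ 2) - 1 / 2))) := by
  set Bt : Matrix (Fin n × Fin m) (Fin n × Fin r) ℝ := (1 : Matrix (Fin n) (Fin n) ℝ) ⊗ₖ B
  have hA : IsUnit (Btᵀ * Bt).det := isUnit_det_transpose_mul_one_kronecker <|
    isUnit_det_transpose_mul_self_of_rank_eq (by rw [hrank, Fintype.card_fin])
  have hD : IsUnit (diagonal fun p : Fin n × Fin r => _root_.vec Om p ^ 2).det := by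
    rw [det_diagonal, isUnit_iff_ne_zero]
    exact Finset.prod_ne_zero_iff.mpr fun p _ => pow_ne_zero 2 (hΩ p.2 p.1).ne'
  -- `_root_.vec` is definitionally Mathlib's `Matrix.vec`.
  have hvec : Bt *ᵥ _root_.vec M = _root_.vec (B * M) := (vec_mul_eq_mulVec B M).symm
  have hKL := tendsto_gaussianKL_regularized hA (pow_pos hσ 2) hD (_root_.vec M)
  rw [gaussianKL_diagonal_sq_smul_one (s := _root_.vec Om) hσ.ne' fun p => (hΩ p.2 p.1).ne',
    Fintype.sum_prod_type_right, hvec] at hKL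
  refine hKL.congr fun l => ?_
  rw [gaussianKL, Fintype.card_prod, Fintype.card_fin, Fintype.card_fin, mul_comm n m]
end
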